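/- If M is a 2gsm realizing a finitary transduction, then M itself is finite visit with bound k equal to the number of states of M: every pair (w,z) realized by M has an accepting computation visiting each tape position at most k times. -/

import Mathlib

/-- A (nondeterministic) two-way generalized sequential machine (2gsm):
finite state set, instructions read the tape symbol (input letter or one of the
two endmarkers, `Sum.inr false` = left marker, `Sum.inr true` = right marker),
and nondeterministically choose a new state, an output string and a head move
in {-1,0,+1}.  The final state has no instructions, and the overall set of
instructions is finite. -/
structure GSM2 (A B : Type) where
  Q : Type
  finQ : Fintype Q
  q0 : Q
  qf : Q
  δ : Q → (A ⊕ Bool) → Set (Q × List B × ℤ)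
  moveOK : ∀ q s t, t ∈ δ q s → t.2.2 = -1 ∨ t.2.2 = 0 ∨ t.2.2 = 1
  finalHalt : ∀ s, δ qf s = ∅
  instrFin : Set.Finite {x : Q × (A ⊕ Bool) × Q × List B × ℤ | x.2.2 ∈ δ x.1 x.2.1}

namespace GSM2

variable {A B : Type}

/-- The symbol stored at position `i` of the tape holding `⊢ w ⊣`
(positions `0, …, |w|+1`). -/
def tapeSym (w : List A) (i : ℤ) : Option (A ⊕ Bool) :=
  if i = 0 then some (Sum.inr false)
  else if i = (w.length : ℤ) + 1 then some (Sum.inr true)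
  else if 1 ≤ i ∧ i ≤ (w.length : ℤ) then (w[(i - 1).toNat]?).map Sum.inl
  else none

/-- One step of the machine on input `w`: from configuration `c` (state,
position), writing `α` to the output tape, to configuration `c'`. -/
def Step (M : GSM2 A B) (w : List A) (c : M.Q × ℤ) (α : List B) (c' : M.Q × ℤ) : Prop :=
  ∃ s, tapeSym w c.2 = some s ∧
    ∃ ε : ℤ, (c'.1, α, ε) ∈ M.δ c.1 s ∧ c'.2 = c.2 + ε ∧
      0 ≤ c'.2 ∧ c'.2 ≤ (w.length : ℤ) + 1

/-- A computation (trace) is a sequence of configurations, each paired with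
the output string produced by the step leading into it, consecutive entries
being related by `Step`. -/
def IsTrace (M : GSM2 A B) (w : List A) (tr : List ((M.Q × ℤ) × List B)) : Prop :=
  tr.Chain' (fun a b => M.Step w a.1 b.2 b.1)

/-- The total output written during a trace. -/
def output {Q : Type} (tr : List ((Q × ℤ) × List B)) : List B :=
  (tr.map (·.2)).flatten

/-- A successful (accepting) computation on input `w`: it starts in the
initial state on position 0 (with no output yet) and ends in the final state. -/
def Accepting (M : GSM2 A B) (w : List A) (tr : List ((M.Q × ℤ) × List B)) : Prop :=
  M.IsTrace w tr ∧ tr.head? = some ((M.q0, 0), []) ∧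
    ∃ c, tr.getLast? = some c ∧ c.1.1 = M.qf

/-- `M` realizes the pair `(w, z)`. -/
def Realizes (M : GSM2 A B) (w : List A) (z : List B) : Prop :=
  ∃ tr, M.Accepting w tr ∧ output tr = z

/-- `M` realizes the string transduction `m`. -/
def RealizesRel (M : GSM2 A B) (m : List A → List B → Prop) : Prop :=
  ∀ w z, M.Realizes w z ↔ m w z

/-- The number of visits a trace makes to tape position `i`. -/
def visits {Q : Type} (tr : List ((Q × ℤ) × List B)) (i : ℤ) : ℕ :=
  tr.countP (fun c => decide (c.1.2 = i))

/-- A trace is `k`-visiting if it visits each tape position at most `k` times. -/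
def KVisiting {Q : Type} (k : ℕ) (tr : List ((Q × ℤ) × List B)) : Prop :=
  ∀ i : ℤ, visits tr i ≤ k

/-- A deterministic 2gsm: in each state, on each tape symbol, at most one
instruction applies. -/
def Deterministic (M : GSM2 A B) : Prop :=
  ∀ q s, (M.δ q s).Subsingleton

/-- `M` is finite visit: for some constant `k`, every realized pair has an
accepting `k`-visiting computation. -/
def FiniteVisit (M : GSM2 A B) : Prop :=
  ∃ k, ∀ w z, M.Realizes w z →
    ∃ tr, M.Accepting w tr ∧ output tr = z ∧ KVisiting k tr

end GSM2

/-- The transductions realized by nondeterministic 2gsm's. -/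
def IsNGSM {A B : Type} (m : List A → List B → Prop) : Prop :=
  ∃ M : GSM2 A B, M.RealizesRel m

/-- The transductions realized by finite-visit nondeterministic 2gsm's. -/
def IsNGSMfin {A B : Type} (m : List A → List B → Prop) : Prop :=
  ∃ M : GSM2 A B, M.RealizesRel m ∧ M.FiniteVisit

/-- A transduction is finitary if every input has finitely many images. -/
def Finitary {A B : Type} (m : List A → List B → Prop) : Prop :=
  ∀ w, {z | m w z}.Finite

/-! If an accepting computation visits some position more than `card Q` times, it is twice in
the same configuration, so it splits as `l₁ ++ l₂ ++ l₃` with `l₂` a loop from that configuration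
back to itself. Cutting the loop out, or repeating it, again gives accepting computations. If the
loop writes nothing, cutting it out shortens the computation without changing the output; otherwise
repeating it produces infinitely many outputs on the same input. Hence a shortest accepting
computation with a given output is `card Q`-visiting. -/

namespace List

theorem exists_pair_sublist_of_card_lt_countP {α γ : Type*} [Fintype γ] (f : α → γ)
    {p : α → Bool} {l : List α} (h : Fintype.card γ < l.countP p) :
    ∃ a b, [a, b] <+ l ∧ p a ∧ p b ∧ f a = f b := by
  classical
  have hdup : ¬ ((l.filter p).map f).Nodup := fun hnd => by
    have := hnd.length_le_card
    rw [length_map, ← countP_eq_length_filter] at this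
    omega
  obtain ⟨c, hc⟩ : ∃ c, [c, c] <+ (l.filter p).map f := by
    simpa [nodup_iff_sublist] using hdup
  obtain ⟨l', hl', hmap⟩ := sublist_map_iff.mp hc
  obtain ⟨a, b, rfl, hab⟩ : ∃ a b, l' = [a, b] ∧ f a = f b := by
    obtain ⟨a, l₁, rfl, rfl, h₁⟩ := map_eq_cons_iff.mp hmap.symm
    obtain ⟨b, l₂, rfl, hb, h₂⟩ := map_eq_cons_iff.mp h₁
    exact ⟨a, b, by rw [map_eq_nil_iff.mp h₂], hb.symm⟩
  have hp : ∀ x ∈ [a, b], p x := fun x hx => (mem_filter.mp (hl'.subset hx)).2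
  exact ⟨a, b, hl'.trans filter_sublist, hp a (by simp), hp b (by simp), hab⟩

theorem exists_eq_append_cons_append_cons_of_pair_sublist {α : Type*} {a b : α} {l : List α}
    (h : [a, b] <+ l) : ∃ s t v, l = s ++ a :: t ++ b :: v := by
  obtain ⟨r₁, r₂, rfl, ha, hb⟩ := cons_sublist_iff.mp h
  obtain ⟨s, t, rfl⟩ := append_of_mem ha
  obtain ⟨u, v, rfl⟩ := append_of_mem (singleton_sublist.mp hb)
  exact ⟨s, t ++ u, v, by simp⟩

end List

namespace GSM2

variable {A B : Type}

theorem output_append {Q : Type} (l₁ l₂ : List ((Q × ℤ) × List B)) :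
    output (l₁ ++ l₂) = output l₁ ++ output l₂ := by
  simp [output]

theorem length_output_flatten_replicate {Q : Type} (n : ℕ) (l : List ((Q × ℤ) × List B)) :
    (output (List.replicate n l).flatten).length = n * (output l).length := by
  induction n with
  | zero => simp [output]
  | succ n ih => rw [List.replicate_succ, List.flatten_cons, output_append, List.length_append, ih,
      Nat.succ_mul, Nat.add_comm]

theorem exists_loop_of_not_kVisiting {Q : Type} [Fintype Q] {tr : List ((Q × ℤ) × List B)}
    (h : ¬ KVisiting (Fintype.card Q) tr) :
    ∃ l₁ l₂ l₃ x y, tr = l₁ ++ l₂ ++ l₃ ∧ l₁.getLast? = some x ∧ l₂.getLast? = some y ∧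
      x.1 = y.1 := by
  simp only [KVisiting, visits, not_forall, not_le] at h
  obtain ⟨i, hi⟩ := h
  obtain ⟨a, b, hab, ha, hb, hstate⟩ :=
    List.exists_pair_sublist_of_card_lt_countP (fun c => c.1.1) hi
  obtain ⟨s, t, v, rfl⟩ := List.exists_eq_append_cons_append_cons_of_pair_sublist hab
  refine ⟨s ++ [a], t ++ [b], v, a, b, by simp, by simp, by simp, Prod.ext hstate ?_⟩
  simp only [decide_eq_true_eq] at ha hb
  rw [ha, hb]

variable {M : GSM2 A B} {w : List A}

-- A step depends on its source entry only through the configuration, not the output stored there.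
theorem IsTrace.splice {l₁ l₂ l₃ l₄ : List ((M.Q × ℤ) × List B)} {x y : (M.Q × ℤ) × List B}
    (h₁₂ : M.IsTrace w (l₁ ++ l₂)) (h₃₄ : M.IsTrace w (l₃ ++ l₄))
    (hx : l₁.getLast? = some x) (hy : l₃.getLast? = some y) (hxy : x.1 = y.1) :
    M.IsTrace w (l₁ ++ l₄) := by
  obtain ⟨h₁, -, -⟩ := List.isChain_append.1 h₁₂
  obtain ⟨-, h₄, h₃₄⟩ := List.isChain_append.1 h₃₄
  refine List.isChain_append.2 ⟨h₁, h₄, ?_⟩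
  rw [hx]
  rintro _ ⟨⟩ z hz
  simpa only [hxy] using h₃₄ y (by rw [hy]; rfl) z hz

theorem Accepting.splice {l₁ l₂ l₃ l₄ : List ((M.Q × ℤ) × List B)} {x y : (M.Q × ℤ) × List B}
    (h₁₂ : M.Accepting w (l₁ ++ l₂)) (h₃₄ : M.Accepting w (l₃ ++ l₄))
    (hx : l₁.getLast? = some x) (hy : l₃.getLast? = some y) (hxy : x.1 = y.1) :
    M.Accepting w (l₁ ++ l₄) := by
  obtain ⟨htr₁₂, hhead, -⟩ := h₁₂
  obtain ⟨htr₃₄, -, c, hc, hcf⟩ := h₃₄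
  refine ⟨htr₁₂.splice htr₃₄ hx hy hxy, ?_, ?_⟩
  · obtain ⟨l₁', rfl⟩ := List.getLast?_eq_some_iff.mp hx
    rw [← hhead]
    cases l₁' <;> simp
  · rw [List.getLast?_append] at hc ⊢
    cases hl₄ : l₄.getLast? with
    | none =>
      rw [hl₄, hy] at hc
      cases hc
      exact ⟨x, by rw [hx]; rfl, by rw [hxy]; exact hcf⟩
    | some d =>
      rw [hl₄] at hc
      exact ⟨c, hc, hcf⟩

theorem Accepting.pump {l₁ l₂ l₃ : List ((M.Q × ℤ) × List B)} {x y : (M.Q × ℤ) × List B}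
    (h : M.Accepting w (l₁ ++ l₂ ++ l₃))
    (hx : l₁.getLast? = some x) (hy : l₂.getLast? = some y) (hxy : x.1 = y.1) (n : ℕ) :
    M.Accepting w (l₁ ++ (List.replicate n l₂).flatten ++ l₃) := by
  have h' : M.Accepting w (l₁ ++ (l₂ ++ l₃)) := by simpa using h
  cases n with
  | zero =>
    have hlast : (l₁ ++ l₂).getLast? = some y := by rw [List.getLast?_append, hy]; rfl
    simpa using h'.splice h hx hlast hxy
  | succ n =>
    induction n with
    | zero => simpa using h
    | succ n ih =>
      have hlast : (l₁ ++ (List.replicate (n + 1) l₂).flatten).getLast? = some y := by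
        rw [List.getLast?_append, List.replicate_succ', List.flatten_append]
        simp [hy]
      simpa [List.replicate_succ'] using ih.splice h' hlast hx hxy.symm

theorem infinite_realizes_of_loop {l₁ l₂ l₃ : List ((M.Q × ℤ) × List B)}
    {x y : (M.Q × ℤ) × List B} (h : M.Accepting w (l₁ ++ l₂ ++ l₃))
    (hx : l₁.getLast? = some x) (hy : l₂.getLast? = some y) (hxy : x.1 = y.1)
    (hout : output l₂ ≠ []) : {z | M.Realizes w z}.Infinite := by
  have hlength : ∀ n, (output (l₁ ++ (List.replicate n l₂).flatten ++ l₃)).length =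
      (output l₁).length + n * (output l₂).length + (output l₃).length := fun n => by
    simp only [output_append, List.length_append, length_output_flatten_replicate]
  have hpos : 0 < (output l₂).length := List.length_pos_iff.mpr hout
  refine Set.infinite_of_injective_forall_mem
    (f := fun n => output (l₁ ++ (List.replicate n l₂).flatten ++ l₃))
    (fun m n hmn => ?_) (fun n => ⟨_, h.pump hx hy hxy n, rfl⟩)
  have := congrArg List.length hmn
  simp only [hlength] at this
  exact Nat.eq_of_mul_eq_mul_right hpos (by omega)

end GSM2

/-- **A 2gsm realizing a finitary transduction is itself finite visit**, with
visit bound the number of states: every realized pair has an accepting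
computation visiting each tape position at most `card Q` times. -/
theorem mso_gsm_stmt_4 {A B : Type} (M : GSM2 A B)
    (hfin : ∀ w, {z | M.Realizes w z}.Finite) :
    ∀ w z, M.Realizes w z →
      ∃ tr, M.Accepting w tr ∧ GSM2.output tr = z ∧
        GSM2.KVisiting (@Fintype.card M.Q M.finQ) tr := by
  let _ := M.finQ
  intro w z hz
  obtain ⟨tr, ⟨hacc, hout⟩, hmin⟩ := (InvImage.wf List.length wellFounded_lt).has_min
    {tr | M.Accepting w tr ∧ GSM2.output tr = z} hz
  refine ⟨tr, hacc, hout, ?_⟩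
  by_contra hk
  obtain ⟨l₁, l₂, l₃, x, y, rfl, hx, hy, hxy⟩ := GSM2.exists_loop_of_not_kVisiting hk
  by_cases hsilent : GSM2.output l₂ = []
  · have hshorter : (l₁ ++ l₃).length < (l₁ ++ l₂ ++ l₃).length := by
      have : 0 < l₂.length := List.length_pos_iff.mpr (by rintro rfl; simp at hy)
      simp only [List.length_append]
      omega
    exact hmin (l₁ ++ l₃) ⟨by simpa using hacc.pump hx hy hxy 0,
      by simpa [GSM2.output_append, hsilent] using hout⟩ hshorter
  · exact GSM2.infinite_realizes_of_loop hacc hx hy hxy hsilent (hfin w)
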